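/- For any sprawl (V, E, P, N) in a universe U and any workload (Q_i)_{i∈I} in U: (i) if the sprawl is responsible for the workload, then it is correct for the workload; (ii) if the sprawl is correct, then for every v ∈ V and every query Q_i with v ∈ Q_i there exists a hyperpath from ∅ to v all of whose edges e satisfy condition (R1), namely that Q_i intersects every region in P(e); consequently (iii) a correct sprawl in which N(e) = ∅ for every edge e is responsible. -/

import Mathlib

/-- A signed directed hypergraph. -/
structure SignedHyperdigraph (V : Type*) where
  E : Type
  finE : Finite E
  src : E → Set V
  tgt : E → V
  sign : E → Bool

namespace SignedHyperdigraph

/-- The traversal repertoire of a signed hyperdigraph. -/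
def repertoire {V : Type*} (G : SignedHyperdigraph V) : Set (List V) :=
  {τ | ∀ i : Fin τ.length,
    (τ.get i ∉ τ.take i.val) ∧
    (∃ e : G.E, G.sign e = true ∧ G.src e ⊆ {v | v ∈ τ.take i.val} ∧
      G.tgt e = τ.get i) ∧
    ¬ ∃ e : G.E, G.sign e = false ∧ G.src e ⊆ {v | v ∈ τ.take i.val} ∧
      G.tgt e = τ.get i}

end SignedHyperdigraph

/-- A sprawl in a universe `U` with ground set `V ⊆ U`. -/
structure Sprawl (U : Type*) (V : Set U) where
  E : Type
  finE : Finite E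
  src : E → Set V
  tgt : E → V
  P : E → Finset (Set U)
  N : E → Finset (Set U)

namespace Sprawl

variable {U : Type*} {V : Set U}

/-- The signed hyperdigraph induced on the ground set by a query `Q`. -/
def induced (S : Sprawl U V) (Q : Set U) : SignedHyperdigraph V where
  E := {p : S.E × Bool //
    (p.2 = true ∧ (∀ R ∈ S.P p.1, (Q ∩ R).Nonempty) ∧
      (∀ R ∈ S.N p.1, (Q ∩ R).Nonempty)) ∨
    (p.2 = false ∧ ∃ R ∈ S.N p.1, Q ∩ R = ∅)}
  finE := by
    have : Finite S.E := S.finE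
    infer_instance
  src := fun e => S.src e.val.1
  tgt := fun e => S.tgt e.val.1
  sign := fun e => e.val.2

/-- A set `Γ` of edges can be ordered into a sequence `e₁, …, e_k` (`k ≥ 1`,
distinct edges) with `src(eᵢ) ⊆ {tgt(eⱼ) : j < i}` for each `i` and
`tgt(e_k) = v`. -/
def Orderable (S : Sprawl U V) (Γ : Set S.E) (v : V) : Prop :=
  ∃ l : List S.E, l.Nodup ∧ {e | e ∈ l} = Γ ∧
    (∀ i : Fin l.length,
      S.src (l.get i) ⊆ {w | ∃ j : Fin l.length, j.val < i.val ∧ S.tgt (l.get j) = w}) ∧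
    (∃ e, l.getLast? = some e ∧ S.tgt e = v)

/-- A hyperpath from `∅` to `v`: a minimal finite set of edges that can be
ordered as above (no strict subset admits such an ordering). -/
def IsHyperpath (S : Sprawl U V) (Γ : Set S.E) (v : V) : Prop :=
  Γ.Finite ∧ Orderable S Γ v ∧ ∀ Γ' ⊂ Γ, ¬ Orderable S Γ' v

/-- The node set of a set of edges: all sources and targets of its edges. -/
def nodeSet (S : Sprawl U V) (Γ : Set S.E) : Set V :=
  (⋃ e ∈ Γ, S.src e) ∪ (S.tgt '' Γ)

/-- Correctness of a sprawl for a workload: for every query `Qᵢ` and every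
maximal traversal `τ` of the induced signed hyperdigraph, `Qᵢ ∩ V ⊆ τ̃`. -/
def Correct (S : Sprawl U V) {I : Type*} (Q : I → Set U) : Prop :=
  ∀ i (τ : List V), τ ∈ (S.induced (Q i)).repertoire →
    (¬ ∃ x : V, τ ++ [x] ∈ (S.induced (Q i)).repertoire) →
    ∀ v : V, (v : U) ∈ Q i → v ∈ τ

/-- Responsibility of a sprawl for a workload: for every node `v` and query
`Qᵢ` containing it, there is a hyperpath `Γ` from `∅` to `v`, with node set
`V′`, such that (R1) `Qᵢ` intersects every positive region of every edge of
`Γ`, and (R2) `Qᵢ` intersects every negative region of every edge whose target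
lies in `V′`. -/
def Responsible (S : Sprawl U V) {I : Type*} (Q : I → Set U) : Prop :=
  ∀ (v : V) (i : I), (v : U) ∈ Q i →
    ∃ Γ : Set S.E, IsHyperpath S Γ v ∧
      (∀ e ∈ Γ, ∀ R ∈ S.P e, (Q i ∩ R).Nonempty) ∧
      (∀ e' : S.E, S.tgt e' ∈ nodeSet S Γ → ∀ R' ∈ S.N e', (Q i ∩ R').Nonempty)

end Sprawl

/-!
(i) If a maximal traversal `τ` missed a queried node `v`, walk along an ordering of the
responsible hyperpath to `v`: its first edge whose target is not in `τ` has all its sources in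
`τ`. By (R1) and (R2) that edge is positive in the induced graph, and (R2) on the node set also
rules out every negative edge into its target, so `τ` could be extended.

(ii) A maximal traversal exists because its entries are targets of distinct positive edges, and
by correctness it contains `v`. The positive edges that enabled the entries up to `v` satisfy (R1)
and form an orderable set reaching `v`; a minimal orderable subset of it is a hyperpath.
(iii) is (ii), with (R2) vacuous.
-/

namespace SignedHyperdigraph

variable {W : Type*} {G : SignedHyperdigraph W} {τ : List W}

theorem nodup_of_mem_repertoire (h : τ ∈ G.repertoire) : τ.Nodup := by
  refine List.pairwise_iff_getElem.mpr fun i j hi hj hij hEq => (h ⟨j, hj⟩).1 ?_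
  exact List.mem_take_iff_getElem.mpr ⟨i, by simp [hij, hi], hEq⟩

theorem nil_mem_repertoire (G : SignedHyperdigraph W) : [] ∈ G.repertoire :=
  fun i => i.elim0

theorem take_mem_repertoire (h : τ ∈ G.repertoire) (n : ℕ) : τ.take n ∈ G.repertoire := by
  intro i
  have hi : i.val < τ.length := lt_of_lt_of_le i.isLt (List.length_take_le' _ _)
  have hin : i.val < n := lt_of_lt_of_le i.isLt (List.length_take_le _ _)
  have htake : (τ.take n).take i.val = τ.take i.val := by
    rw [List.take_take, min_eq_left hin.le]
  simpa [htake] using h ⟨i.val, hi⟩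

theorem append_singleton_mem_repertoire {x : W} (hτ : τ ∈ G.repertoire) (hx : x ∉ τ)
    (hpos : ∃ e : G.E, G.sign e = true ∧ G.src e ⊆ {v | v ∈ τ} ∧ G.tgt e = x)
    (hneg : ¬ ∃ e : G.E, G.sign e = false ∧ G.src e ⊆ {v | v ∈ τ} ∧ G.tgt e = x) :
    τ ++ [x] ∈ G.repertoire := by
  intro i
  have hi : i.val < τ.length + 1 := by simpa using i.isLt
  rcases Nat.lt_succ_iff_lt_or_eq.mp hi with h | h
  · have htake : (τ ++ [x]).take i.val = τ.take i.val := List.take_append_of_le_length h.le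
    have hget : (τ ++ [x]).get i = τ.get ⟨i.val, h⟩ := by
      simp [List.getElem_append_left h]
    rw [htake, hget]
    exact hτ ⟨i.val, h⟩
  · have htake : (τ ++ [x]).take i.val = τ := by rw [h, List.take_left]
    have hget : (τ ++ [x]).get i = x := by simp [List.getElem_concat_length h]
    rw [htake, hget]
    exact ⟨hx, hpos, hneg⟩

theorem length_le_card_of_mem_repertoire (h : τ ∈ G.repertoire) : τ.length ≤ Nat.card G.E := by
  have := G.finE
  choose f _ _ hf using fun i => (h i).2.1
  have hinj : Function.Injective f := fun i j hij =>
    (nodup_of_mem_repertoire h).injective_get (by rw [← hf, ← hf, hij])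
  simpa using Nat.card_le_card_of_injective f hinj

theorem exists_maximal_mem_repertoire (G : SignedHyperdigraph W) :
    ∃ τ ∈ G.repertoire, ¬ ∃ x : W, τ ++ [x] ∈ G.repertoire := by
  by_contra! hext
  have hlen : ∀ n : ℕ, ∃ τ ∈ G.repertoire, τ.length = n := by
    intro n
    induction n with
    | zero => exact ⟨[], nil_mem_repertoire G, rfl⟩
    | succ n ih =>
      obtain ⟨τ, hτ, rfl⟩ := ih
      obtain ⟨x, hx⟩ := hext τ hτ
      exact ⟨τ ++ [x], hx, by simp⟩
  obtain ⟨τ, hτ, hτlen⟩ := hlen (Nat.card G.E + 1)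
  have := length_le_card_of_mem_repertoire hτ
  omega

theorem exists_mem_repertoire_getLast?_eq (h : τ ∈ G.repertoire) {v : W} (hv : v ∈ τ) :
    ∃ τ' ∈ G.repertoire, τ'.getLast? = some v := by
  obtain ⟨k, hk, rfl⟩ := List.mem_iff_getElem.mp hv
  exact ⟨τ.take (k + 1), take_mem_repertoire h _, by simp [List.getLast?_take, hk]⟩

end SignedHyperdigraph

namespace Sprawl

variable {U : Type*} {V : Set U} {S : Sprawl U V}

theorem exists_isHyperpath_le {Γ : Set S.E} {v : V} (h : S.Orderable Γ v) :
    ∃ Γ' ≤ Γ, S.IsHyperpath Γ' v := by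
  have := S.finE
  obtain ⟨Γ', hle, hmin⟩ := exists_minimal_le_of_wellFoundedLT (S.Orderable · v) Γ h
  exact ⟨Γ', hle, Γ'.toFinite, hmin.prop, fun _ hlt => hmin.not_prop_of_lt hlt⟩

/-- Following an ordering of `Γ`, the first edge whose target leaves `A` has all its sources in
`A`. -/
theorem Orderable.exists_src_subset_of_tgt_notMem {Γ : Set S.E} {v : V} (h : S.Orderable Γ v)
    {A : Set V} (hv : v ∉ A) : ∃ e ∈ Γ, S.src e ⊆ A ∧ S.tgt e ∉ A := by
  obtain ⟨l, -, rfl, hsrc, e, hlast, rfl⟩ := h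
  by_contra! hclosed
  have hall (i : Fin l.length) : S.tgt (l.get i) ∈ A := by
    induction i using WellFoundedLT.induction with
    | _ i ih =>
      refine hclosed _ (List.get_mem l i) fun w hw => ?_
      obtain ⟨j, hji, rfl⟩ := hsrc i hw
      exact ih j hji
  obtain ⟨i, rfl⟩ := List.mem_iff_get.mp (List.mem_of_getLast? hlast)
  exact hv (hall i)

section Query

variable {Q : Set U}

theorem induced_sign_eq_true {ε : (S.induced Q).E} (h : (S.induced Q).sign ε = true) :
    (∀ R ∈ S.P ε.val.1, (Q ∩ R).Nonempty) ∧ ∀ R ∈ S.N ε.val.1, (Q ∩ R).Nonempty := by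
  rcases ε.2 with ⟨-, hP, hN⟩ | ⟨hfalse, -⟩
  · exact ⟨hP, hN⟩
  · exact absurd (hfalse.symm.trans h) Bool.false_ne_true

theorem induced_sign_eq_false {ε : (S.induced Q).E} (h : (S.induced Q).sign ε = false) :
    ∃ R ∈ S.N ε.val.1, Q ∩ R = ∅ := by
  rcases ε.2 with ⟨htrue, -, -⟩ | ⟨-, hN⟩
  · exact absurd (h.symm.trans htrue) Bool.false_ne_true
  · exact hN

theorem exists_edge_of_mem_repertoire {τ : List V} (hτ : τ ∈ (S.induced Q).repertoire)
    (i : Fin τ.length) : ∃ e : S.E, S.src e ⊆ {w | w ∈ τ.take i} ∧ S.tgt e = τ.get i ∧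
      ∀ R ∈ S.P e, (Q ∩ R).Nonempty := by
  obtain ⟨ε, hpos, hsrc, htgt⟩ := (hτ i).2.1
  exact ⟨ε.val.1, hsrc, htgt, (induced_sign_eq_true hpos).1⟩

theorem exists_orderable_of_mem_repertoire {τ : List V} (hτ : τ ∈ (S.induced Q).repertoire)
    {v : V} (hv : τ.getLast? = some v) :
    ∃ Γ : Set S.E, S.Orderable Γ v ∧ ∀ e ∈ Γ, ∀ R ∈ S.P e, (Q ∩ R).Nonempty := by
  choose f hsrc htgt hP using exists_edge_of_mem_repertoire hτ
  have hmap : (List.ofFn f).map S.tgt = τ := by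
    rw [List.map_ofFn]
    exact (congrArg List.ofFn (funext htgt)).trans (List.ofFn_get τ)
  refine ⟨{e | e ∈ List.ofFn f}, ⟨List.ofFn f, ?_, rfl, ?_, ?_⟩, ?_⟩
  · refine List.Nodup.of_map S.tgt ?_
    rw [hmap]
    exact SignedHyperdigraph.nodup_of_mem_repertoire hτ
  · intro i w hw
    rw [List.get_ofFn] at hw
    have hw' : w ∈ ((List.ofFn f).map S.tgt).take i := by
      rw [hmap]
      simpa using hsrc _ hw
    obtain ⟨j, hj, rfl⟩ := List.mem_take_iff_getElem.mp hw'
    rw [List.length_map, lt_min_iff] at hj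
    exact ⟨⟨j, hj.2⟩, hj.1, by simp⟩
  · rw [← hmap, List.getLast?_map] at hv
    simpa using hv
  · rintro _ he
    obtain ⟨i, rfl⟩ := List.mem_ofFn.mp he
    exact hP i

end Query

section Workload

variable {I : Type*} {Q : I → Set U}

theorem Responsible.correct (h : S.Responsible Q) : S.Correct Q := by
  intro i τ hτ hmax v hv
  by_contra hvτ
  obtain ⟨Γ, ⟨-, hord, -⟩, hR1, hR2⟩ := h v i hv
  obtain ⟨e, heΓ, hsrc, htgt⟩ := hord.exists_src_subset_of_tgt_notMem (A := {w | w ∈ τ}) hvτ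
  have hnode : S.tgt e ∈ S.nodeSet Γ := Or.inr ⟨e, heΓ, rfl⟩
  refine hmax ⟨S.tgt e, SignedHyperdigraph.append_singleton_mem_repertoire hτ htgt ?_ ?_⟩
  · exact ⟨⟨(e, true), Or.inl ⟨rfl, hR1 e heΓ, hR2 e hnode⟩⟩, rfl, hsrc, rfl⟩
  · rintro ⟨ε, hneg, -, hεtgt⟩
    obtain ⟨R, hR, hQR⟩ := induced_sign_eq_false hneg
    have hεnode : S.tgt ε.val.1 ∈ S.nodeSet Γ := by
      change (S.induced (Q i)).tgt ε ∈ _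
      rwa [hεtgt]
    exact (hR2 ε.val.1 hεnode R hR).ne_empty hQR

theorem Correct.exists_isHyperpath (h : S.Correct Q) {v : V} {i : I} (hv : (v : U) ∈ Q i) :
    ∃ Γ : Set S.E, S.IsHyperpath Γ v ∧ ∀ e ∈ Γ, ∀ R ∈ S.P e, (Q i ∩ R).Nonempty := by
  obtain ⟨τ, hτ, hmax⟩ := (S.induced (Q i)).exists_maximal_mem_repertoire
  obtain ⟨τ', hτ', hlast⟩ :=
    SignedHyperdigraph.exists_mem_repertoire_getLast?_eq hτ (h i τ hτ hmax v hv)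
  obtain ⟨Γ, hord, hR1⟩ := exists_orderable_of_mem_repertoire hτ' hlast
  obtain ⟨Γ', hle, hpath⟩ := exists_isHyperpath_le hord
  exact ⟨Γ', hpath, fun e he => hR1 e (hle he)⟩

end Workload

end Sprawl

theorem responsible_correct_relations_general
    {U : Type} {V : Set U}
    {I : Type} (S : Sprawl U V) (Q : I → Set U) :
    (S.Responsible Q → S.Correct Q) ∧
    (S.Correct Q → ∀ (v : V) (i : I), (v : U) ∈ Q i →
      ∃ Γ : Set S.E, S.IsHyperpath Γ v ∧
        ∀ e ∈ Γ, ∀ R ∈ S.P e, (Q i ∩ R).Nonempty) ∧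
    ((S.Correct Q ∧ ∀ e : S.E, S.N e = ∅) → S.Responsible Q) := by
  refine ⟨Sprawl.Responsible.correct, fun hC _ _ hv => hC.exists_isHyperpath hv, ?_⟩
  rintro ⟨hC, hN⟩ v i hv
  obtain ⟨Γ, hpath, hR1⟩ := hC.exists_isHyperpath hv
  exact ⟨Γ, hpath, hR1, fun e _ R hR => by simp [hN e] at hR⟩

/-- Observation on responsibility and correctness: for any sprawl
and workload, (i) responsible implies correct; (ii) correct implies that for
every node `v` and query containing it there is a hyperpath from `∅` to `v`
all of whose edges satisfy (R1); consequently (iii) a correct sprawl with no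
negative regions is responsible. -/
theorem responsible_correct_relations
    {U : Type} {V : Set U} (hVfin : V.Finite) (hVne : V.Nonempty)
    {I : Type} (S : Sprawl U V) (Q : I → Set U) :
    (S.Responsible Q → S.Correct Q) ∧
    (S.Correct Q → ∀ (v : V) (i : I), (v : U) ∈ Q i →
      ∃ Γ : Set S.E, S.IsHyperpath Γ v ∧
        ∀ e ∈ Γ, ∀ R ∈ S.P e, (Q i ∩ R).Nonempty) ∧
    ((S.Correct Q ∧ ∀ e : S.E, S.N e = ∅) → S.Responsible Q) :=
  responsible_correct_relations_general S Q
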